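/- arXiv:1909.07905 — 4 statements merged into one kernel-verified Lean document; each statement's English description precedes it below -/
import Mathlib

section
/- For any origin-symmetric convex body K in the plane, there exist points x, y on the boundary of K such that x is Birkhoff orthogonal to y and y is Birkhoff orthogonal to x (i.e., Auerbach points exist). -/
open Set MeasureTheory Pointwise

abbrev Plane := ℝ × ℝ

/-- An origin-symmetric convex body in the plane: compact, convex,
nonempty interior, symmetric about the origin. -/
def IsSymmConvexBody (K : Set Plane) : Prop :=
  Convex ℝ K ∧ IsCompact K ∧ (interior K).Nonempty ∧ K = -K

/-- Birkhoff orthogonality with respect to the norm induced by `K`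
(whose Minkowski functional is `gauge K`). -/
def BOrth (K : Set Plane) (x y : Plane) : Prop :=
  ∀ t : ℝ, gauge K x ≤ gauge K (x + t • y)

/-- The set of Auerbach points of `K`. -/
def Auerbach (K : Set Plane) : Set Plane :=
  {x | x ∈ frontier K ∧ ∃ y ∈ frontier K, BOrth K x y ∧ BOrth K y x}

/-- `E(K)`: the union of the open non-degenerate segments contained in `∂K`. -/
def SegUnion (K : Set Plane) : Set Plane :=
  {x | ∃ a b : Plane, a ≠ b ∧ segment ℝ a b ⊆ frontier K ∧ x ∈ openSegment ℝ a b}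

/-- A closed antipode-free arc of `∂K` with endpoints `x` and `y`:
a closed connected subset of `∂K` containing `x` and `y`, containing no
pair of antipodal points, and minimal with these properties. -/
def IsBArc (K C : Set Plane) (x y : Plane) : Prop :=
  C ⊆ frontier K ∧ IsClosed C ∧ IsPreconnected C ∧ x ∈ C ∧ y ∈ C ∧
  (∀ z ∈ C, -z ∉ C) ∧
  ∀ C' ⊆ C, IsClosed C' → IsPreconnected C' → x ∈ C' → y ∈ C' → C' = C

/-- An angular measure on `∂K`. -/
def IsAngularMeasure (K : Set Plane) (μ : Measure Plane) : Prop :=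
  μ (frontier K) = ENNReal.ofReal (2 * Real.pi) ∧
  μ (frontier K)ᶜ = 0 ∧
  (∀ X : Set Plane, μ (-X) = μ X) ∧
  (∀ x : Plane, μ {x} = 0)

/-- A B-measure: an angular measure giving `π/2` to every closed
antipode-free arc whose endpoints are Birkhoff orthogonal. -/
def IsBMeasure (K : Set Plane) (μ : Measure Plane) : Prop :=
  IsAngularMeasure K μ ∧
  ∀ C x y, IsBArc K C x y → BOrth K x y → μ C = ENNReal.ofReal (Real.pi / 2)

/-- The support of a Borel measure: the points all of whose open
neighborhoods have positive measure. -/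
def msupp {α : Type*} [TopologicalSpace α] [MeasurableSpace α]
    (μ : Measure α) : Set α :=
  {x | ∀ U : Set α, IsOpen U → x ∈ U → 0 < μ U}

/-- Auerbach points exist for any origin-symmetric planar convex body. -/
theorem stmt_0 (K : Set Plane) (hK : IsSymmConvexBody K) :
    ∃ x ∈ frontier K, ∃ y ∈ frontier K, BOrth K x y ∧ BOrth K y x := by
  obtain ⟨hconv, hcomp, ⟨z, hz⟩, hsymm⟩ := hK
  have hnz : -z ∈ interior K := by
    rw [hsymm, show -K = (Homeomorph.neg Plane) ⁻¹' K from rfl,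
      ← Homeomorph.preimage_interior]
    simpa using hz
  have h0 : (0 : Plane) ∈ interior K := by
    have := (hconv.interior) hz hnz (by norm_num : (0:ℝ) ≤ 1/2)
      (by norm_num : (0:ℝ) ≤ 1/2) (by norm_num)
    have he : (1/2 : ℝ) • z + (1/2 : ℝ) • (-z) = (0 : Plane) := by module
    rwa [he] at this
  have habs : Absorbent ℝ K := absorbent_nhds_zero (mem_interior_iff_mem_nhds.mp h0)
  obtain ⟨ε, hε, hball⟩ : ∃ ε > 0, Metric.ball (0:Plane) ε ⊆ K := by
    obtain ⟨ε, hε, hb⟩ := Metric.mem_nhds_iff.mp (mem_interior_iff_mem_nhds.mp h0)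
    exact ⟨ε, hε, hb⟩
  set F : Plane × Plane → ℝ := fun p => p.1.1 * p.2.2 - p.1.2 * p.2.1 with hF
  have hFc : Continuous F := by fun_prop
  clear_value F
  obtain ⟨p, hpmem, hpmax⟩ : ∃ p ∈ K ×ˢ K, IsMaxOn F (K ×ˢ K) p := by
    have : (K ×ˢ K).Nonempty := ⟨(z, z), interior_subset hz, interior_subset hz⟩
    exact (hcomp.prod hcomp).exists_isMaxOn this hFc.continuousOn
  obtain ⟨x, y⟩ := p
  obtain ⟨hxK, hyK⟩ : x ∈ K ∧ y ∈ K := hpmem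
  set M : ℝ := F (x, y) with hM
  clear_value M
  have hMpos : 0 < M := by
    have h1 : ((ε/2, 0) : Plane) ∈ K := by
      apply hball
      simp only [Metric.mem_ball, Prod.dist_eq, Real.dist_eq, sub_zero, Prod.fst_zero,
        Prod.snd_zero, abs_zero]
      rw [abs_of_nonneg (by positivity)]
      simp [hε]
    have h2 : ((0, ε/2) : Plane) ∈ K := by
      apply hball
      simp only [Metric.mem_ball, Prod.dist_eq, Real.dist_eq, sub_zero, Prod.fst_zero,
        Prod.snd_zero, abs_zero]
      rw [abs_of_nonneg (by positivity)]
      simp [hε]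
    have hle : F ((ε/2, 0), (0, ε/2)) ≤ M := by rw [hM]; exact hpmax (Set.mk_mem_prod h1 h2)
    have hval : F ((ε/2, 0), (0, ε/2)) = ε^2/4 := by simp [hF]; ring
    have hq : (0:ℝ) < ε^2/4 := by positivity
    rw [hval] at hle; linarith
  have hKclosed : IsClosed K := hcomp.isClosed
  have hxfr : x ∈ frontier K := by
    rw [hKclosed.frontier_eq]
    refine ⟨hxK, fun hxint => ?_⟩
    have hcont : Continuous fun c : ℝ => c • x := by fun_prop
    have hev : ∀ᶠ c : ℝ in nhds 1, c • x ∈ interior K := by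
      apply hcont.continuousAt.eventually_mem
      simpa using isOpen_interior.mem_nhds hxint
    obtain ⟨δ, hδ, hmem⟩ := Metric.eventually_nhds_iff.mp hev
    have hcK : (1 + δ/2) • x ∈ K := by
      refine interior_subset (hmem ?_)
      rw [Real.dist_eq]; rw [abs_of_nonneg (by linarith)]; linarith
    have hle : F ((1 + δ/2) • x, y) ≤ M := by rw [hM]; exact hpmax (Set.mk_mem_prod hcK hyK)
    have heq : F ((1 + δ/2) • x, y) = (1 + δ/2) * M := by
      rw [hM, hF]; simp only [Prod.smul_fst, Prod.smul_snd, smul_eq_mul]; ring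
    rw [heq] at hle
    nlinarith [mul_pos hδ hMpos]
  have hyfr : y ∈ frontier K := by
    rw [hKclosed.frontier_eq]
    refine ⟨hyK, fun hyint => ?_⟩
    have hcont : Continuous fun c : ℝ => c • y := by fun_prop
    have hev : ∀ᶠ c : ℝ in nhds 1, c • y ∈ interior K := by
      apply hcont.continuousAt.eventually_mem
      simpa using isOpen_interior.mem_nhds hyint
    obtain ⟨δ, hδ, hmem⟩ := Metric.eventually_nhds_iff.mp hev
    have hcK : (1 + δ/2) • y ∈ K := by
      refine interior_subset (hmem ?_)
      rw [Real.dist_eq]; rw [abs_of_nonneg (by linarith)]; linarith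
    have hle : F (x, (1 + δ/2) • y) ≤ M := by rw [hM]; exact hpmax (Set.mk_mem_prod hxK hcK)
    have heq : F (x, (1 + δ/2) • y) = (1 + δ/2) * M := by
      rw [hM, hF]; simp only [Prod.smul_fst, Prod.smul_snd, smul_eq_mul]; ring
    rw [heq] at hle
    nlinarith [mul_pos hδ hMpos]
  refine ⟨x, hxfr, y, hyfr, ?_, ?_⟩
  · intro t
    refine (gauge_le_one_of_mem hxK).trans ?_
    by_contra h
    push_neg at h
    obtain ⟨b, hb0, hb1, w, hwK, hbw⟩ := exists_lt_of_gauge_lt habs h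
    have hle : F (w, y) ≤ M := by rw [hM]; exact hpmax (Set.mk_mem_prod hwK hyK)
    have hw1 : b * w.1 = x.1 + t * y.1 := congrArg Prod.fst hbw
    have hw2 : b * w.2 = x.2 + t * y.2 := congrArg Prod.snd hbw
    have hFw : b * F (w, y) = M := by
      rw [hM, hF]
      simp only []
      linear_combination y.2 * hw1 - y.1 * hw2
    nlinarith [mul_le_mul_of_nonneg_left hle hb0.le]
  · intro t
    refine (gauge_le_one_of_mem hyK).trans ?_
    by_contra h
    push_neg at h
    obtain ⟨b, hb0, hb1, w, hwK, hbw⟩ := exists_lt_of_gauge_lt habs h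
    have hle : F (x, w) ≤ M := by rw [hM]; exact hpmax (Set.mk_mem_prod hxK hwK)
    have hw1 : b * w.1 = y.1 + t * x.1 := congrArg Prod.fst hbw
    have hw2 : b * w.2 = y.2 + t * x.2 := congrArg Prod.snd hbw
    have hFw : b * F (x, w) = M := by
      rw [hM, hF]
      simp only []
      linear_combination x.1 * hw2 - x.2 * hw1
    nlinarith [mul_le_mul_of_nonneg_left hle hb0.le]
end

section
/- If μ is a B-measure on the boundary of an origin-symmetric planar convex body K, and [x⁻, x⁺] is a non-degenerate line segment contained in ∂K, then μ([x⁻, x⁺]) = 0. -/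
open Set MeasureTheory Pointwise

/-! Write `b - a = c • v` with `c > 0` and `v ∈ ∂K`. The line through `[a, b]` supports `K`, so
every point of `[a, b]` is Birkhoff orthogonal to `v`. For `p ⊣ v`, the part of `∂K` in the cone
spanned by `p` and `v` is the closed antipode-free arc from `p` to `v` (the radial projection of
the chord `[p, v]`), so it has measure `π/2`. The arc from `b` to `v` lies inside the arc from `a`
to `v`, and their difference contains `[a, b]` except for the point `b`; hence `[a, b]` is null. -/

section PairCone

variable {E : Type*} [AddCommGroup E] [Module ℝ E] {p q p' q' x : E}

def pairCone (p q : E) : Set E :=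
  {x | ∃ s t : ℝ, 0 ≤ s ∧ 0 ≤ t ∧ s • p + t • q = x}

theorem left_mem_pairCone : p ∈ pairCone p q := ⟨1, 0, zero_le_one, le_rfl, by simp⟩

theorem right_mem_pairCone : q ∈ pairCone p q := ⟨0, 1, le_rfl, zero_le_one, by simp⟩

theorem smul_mem_pairCone {r : ℝ} (hr : 0 ≤ r) (hx : x ∈ pairCone p q) :
    r • x ∈ pairCone p q := by
  obtain ⟨s, t, hs, ht, rfl⟩ := hx
  exact ⟨r * s, r * t, mul_nonneg hr hs, mul_nonneg hr ht, by module⟩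

theorem segment_subset_pairCone : segment ℝ p q ⊆ pairCone p q :=
  fun _ ⟨s, t, hs, ht, _, hx⟩ => ⟨s, t, hs, ht, hx⟩

theorem pairCone_subset (hp : p' ∈ pairCone p q) (hq : q' ∈ pairCone p q) :
    pairCone p' q' ⊆ pairCone p q := by
  obtain ⟨a, b, ha, hb, rfl⟩ := hp
  obtain ⟨c, d, hc, hd, rfl⟩ := hq
  rintro _ ⟨s, t, hs, ht, rfl⟩
  exact ⟨s * a + t * c, s * b + t * d, by positivity, by positivity, by module⟩

theorem LinearIndependent.eq_zero_of_mem_pairCone_of_neg_mem (hpq : LinearIndependent ℝ ![p, q])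
    (hx : x ∈ pairCone p q) (hnx : -x ∈ pairCone p q) : x = 0 := by
  obtain ⟨s, t, hs, ht, rfl⟩ := hx
  obtain ⟨s', t', hs', ht', hneg⟩ := hnx
  obtain ⟨h₁, h₂⟩ := hpq.eq_zero_of_pair (s := s + s') (t := t + t') <| by
    rw [← sub_eq_zero.2 hneg]; module
  rw [show s = 0 by linarith, show t = 0 by linarith]
  simp

theorem LinearIndependent.lineMap_ne_zero (hpq : LinearIndependent ℝ ![p, q]) (u : ℝ) :
    AffineMap.lineMap p q u ≠ 0 := by
  rw [AffineMap.lineMap_apply_module]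
  intro h
  have := hpq.eq_zero_of_pair h
  linarith [this.1, this.2]

theorem pairCone_add_smul_subset {c : ℝ} (hc : 0 ≤ c) : pairCone (p + c • q) q ⊆ pairCone p q :=
  pairCone_subset ⟨1, c, zero_le_one, hc, by rw [one_smul]⟩ right_mem_pairCone

theorem LinearIndependent.eq_of_mem_segment_of_mem_pairCone (hpq : LinearIndependent ℝ ![p, q])
    {c : ℝ} (hc : 0 ≤ c) (hx : x ∈ segment ℝ p (p + c • q)) (hx' : x ∈ pairCone (p + c • q) q) :
    x = p + c • q := by
  obtain ⟨s, t, hs, ht, hst, rfl⟩ := hx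
  obtain ⟨s', t', -, ht', hx'⟩ := hx'
  obtain ⟨h₁, h₂⟩ := hpq.eq_of_pair (s := s + t) (t := t * c) (s' := s') (t' := s' * c + t') <| by
    linear_combination (norm := module) -hx'
  have ht'0 : t' = 0 := by nlinarith [mul_nonneg (by linarith : 0 ≤ 1 - t) hc]
  rw [← hx', ← h₁, hst, ht'0]
  module

theorem LinearIndependent.segment_subset_sdiff_pairCone (hpq : LinearIndependent ℝ ![p, q])
    {c : ℝ} (hc : 0 ≤ c) :
    segment ℝ p (p + c • q) ⊆ pairCone p q \ pairCone (p + c • q) q ∪ {p + c • q} := by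
  intro x hx
  by_cases hx' : x ∈ pairCone (p + c • q) q
  · exact Or.inr (hpq.eq_of_mem_segment_of_mem_pairCone hc hx hx')
  · exact Or.inl ⟨pairCone_subset left_mem_pairCone (pairCone_add_smul_subset hc left_mem_pairCone)
      (segment_subset_pairCone hx), hx'⟩

end PairCone

theorem IsPreconnected.eq_image_Icc {X : Type*} [TopologicalSpace X] [T2Space X] {f : ℝ → X}
    {a b : ℝ} (hf : ContinuousOn f (Icc a b)) (hinj : InjOn f (Icc a b)) {C : Set X}
    (hC : IsPreconnected C) (hsub : C ⊆ f '' Icc a b) (ha : f a ∈ C) (hb : f b ∈ C) :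
    C = f '' Icc a b := by
  refine hsub.antisymm ?_
  rintro _ ⟨u, hu, rfl⟩
  have hclosed : ∀ {v w}, Icc v w ⊆ Icc a b → IsClosed (f '' Icc v w) := fun h =>
    (isCompact_Icc.image_of_continuousOn (hf.mono h)).isClosed
  have hcover : C ⊆ f '' Icc a u ∪ f '' Icc u b := by
    rw [← image_union, Icc_union_Icc_eq_Icc hu.1 hu.2]
    exact hsub
  obtain ⟨_, hxC, ⟨u₁, hu₁, rfl⟩, ⟨u₂, hu₂, hu₁₂⟩⟩ := isPreconnected_closed_iff.1 hC _ _
    (hclosed (Icc_subset_Icc_right hu.2)) (hclosed (Icc_subset_Icc_left hu.1)) hcover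
    ⟨f a, ha, a, ⟨le_rfl, hu.1⟩, rfl⟩ ⟨f b, hb, b, ⟨hu.2, le_rfl⟩, rfl⟩
  have : u₂ = u₁ := hinj ⟨hu.1.trans hu₂.1, hu₂.2⟩ ⟨hu₁.1, hu₁.2.trans hu.2⟩ hu₁₂
  rwa [show u = u₁ by linarith [hu₁.2, hu₂.1]]

section BOrth

variable {K : Set Plane} {x y : Plane}

theorem BOrth.smul_right (h : BOrth K x y) (r : ℝ) : BOrth K x (r • y) := fun t => by
  simpa only [smul_smul] using h (t * r)

theorem BOrth.linearIndependent (h : BOrth K x y) (hx : 0 < gauge K x) (hy : y ≠ 0) :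
    LinearIndependent ℝ ![x, y] := by
  refine LinearIndependent.pair_iff.2 fun s t hst => ?_
  by_cases hs : s = 0
  · subst hs
    exact ⟨rfl, (smul_eq_zero.1 (by simpa using hst)).resolve_right hy⟩
  · have h0 : x + (s⁻¹ * t) • y = s⁻¹ • (s • x + t • y) := by
      rw [smul_add, smul_smul, smul_smul, inv_mul_cancel₀ hs, one_smul]
    have := h (s⁻¹ * t)
    rw [h0, hst, smul_zero, gauge_zero] at this
    exact absurd this hx.not_ge

end BOrth

section RadialProjection

variable {E : Type*} [AddCommGroup E] [Module ℝ E] {s : Set E} {x : E}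

noncomputable def radialProj (s : Set E) (x : E) : E := (gauge s x)⁻¹ • x

theorem radialProj_of_gauge_eq_one (h : gauge s x = 1) : radialProj s x = x := by
  simp [radialProj, h]

theorem radialProj_smul_of_pos {r : ℝ} (hr : 0 < r) : radialProj s (r • x) = radialProj s x := by
  rw [radialProj, radialProj, gauge_smul_of_nonneg hr.le, smul_eq_mul, smul_smul, mul_inv_rev,
    inv_mul_cancel_right₀ hr.ne']

end RadialProjection

namespace IsSymmConvexBody

variable {K : Set Plane} {a b p q x : Plane}

theorem neg_mem (hK : IsSymmConvexBody K) (hx : x ∈ K) : -x ∈ K := by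
  rw [hK.2.2.2]
  exact neg_mem_neg.2 hx

theorem mem_nhds_zero (hK : IsSymmConvexBody K) : K ∈ nhds (0 : Plane) := by
  obtain ⟨x, hx⟩ := hK.2.2.1
  have hnx : -x ∈ interior K := by
    have hneg : -interior K = interior (-K) := by
      simpa using (Homeomorph.neg Plane).preimage_interior K
    rw [hK.2.2.2, ← hneg]
    exact neg_mem_neg.2 hx
  rw [← mem_interior_iff_mem_nhds]
  simpa using hK.1.interior hx hnx (by norm_num : (0 : ℝ) ≤ 1 / 2) (by norm_num : (0 : ℝ) ≤ 1 / 2)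
    (by norm_num)

theorem absorbent (hK : IsSymmConvexBody K) : Absorbent ℝ K :=
  absorbent_nhds_zero hK.mem_nhds_zero

theorem balanced (hK : IsSymmConvexBody K) : Balanced ℝ K :=
  (balanced_iff_neg_mem hK.1).2 fun _ => hK.neg_mem

theorem convexOn_gauge (hK : IsSymmConvexBody K) : ConvexOn ℝ univ (gauge K) :=
  (gaugeSeminorm hK.balanced hK.1 hK.absorbent).convexOn

theorem gauge_pos (hK : IsSymmConvexBody K) (hx : x ≠ 0) : 0 < gauge K x :=
  (_root_.gauge_pos hK.absorbent (NormedSpace.isVonNBounded_of_isBounded _ hK.2.1.isBounded)).2 hx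

theorem continuous_gauge (hK : IsSymmConvexBody K) : Continuous (gauge K) :=
  _root_.continuous_gauge hK.1 hK.mem_nhds_zero

theorem mem_frontier_iff (hK : IsSymmConvexBody K) : x ∈ frontier K ↔ gauge K x = 1 :=
  (gauge_eq_one_iff_mem_frontier hK.1 hK.mem_nhds_zero).symm

theorem ne_zero_of_mem_frontier (hK : IsSymmConvexBody K) (hx : x ∈ frontier K) : x ≠ 0 := by
  rintro rfl
  simp [hK.mem_frontier_iff] at hx

theorem one_le_gauge_lineMap (hK : IsSymmConvexBody K) (hseg : segment ℝ a b ⊆ frontier K)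
    (s : ℝ) : 1 ≤ gauge K (AffineMap.lineMap a b s) := by
  set φ : ℝ → ℝ := fun u => gauge K (AffineMap.lineMap a b u)
  have hφ : ConvexOn ℝ univ φ := hK.convexOn_gauge.comp_affineMap (AffineMap.lineMap a b)
  have hφ1 : ∀ u ∈ Icc (0 : ℝ) 1, φ u = 1 := fun u hu =>
    hK.mem_frontier_iff.1 (hseg (lineMap_mem_segment ℝ a b hu))
  have hφ0 : φ 0 = φ 1 := by rw [hφ1 0 ⟨le_rfl, zero_le_one⟩, hφ1 1 ⟨zero_le_one, le_rfl⟩]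
  rcases le_or_gt s 0 with hs | hs
  · rw [← hφ1 0 ⟨le_rfl, zero_le_one⟩]
    exact hφ.le_left_of_right_le'' (mem_univ s) (mem_univ 1) hs zero_lt_one hφ0.ge
  rcases le_or_gt s 1 with hs1 | hs1
  · exact (hφ1 s ⟨hs.le, hs1⟩).ge
  · rw [← hφ1 1 ⟨zero_le_one, le_rfl⟩]
    exact hφ.le_right_of_left_le'' (mem_univ 0) (mem_univ s) zero_lt_one hs1.le hφ0.le

theorem bOrth_sub_of_segment_subset_frontier (hK : IsSymmConvexBody K)
    (hseg : segment ℝ a b ⊆ frontier K) (hx : x ∈ segment ℝ a b) : BOrth K x (b - a) := by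
  rw [segment_eq_image_lineMap] at hx
  obtain ⟨u, hu, rfl⟩ := hx
  intro t
  have hshift : AffineMap.lineMap a b u + t • (b - a) = AffineMap.lineMap a b (u + t) := by
    simp only [AffineMap.lineMap_apply_module']
    module
  rw [hK.mem_frontier_iff.1 (hseg (lineMap_mem_segment ℝ a b hu)), hshift]
  exact hK.one_le_gauge_lineMap hseg _

theorem gauge_radialProj (hK : IsSymmConvexBody K) (hx : x ≠ 0) : gauge K (radialProj K x) = 1 := by
  rw [radialProj, gauge_smul_of_nonneg (inv_nonneg.2 (hK.gauge_pos hx).le), smul_eq_mul,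
    inv_mul_cancel₀ (hK.gauge_pos hx).ne']

theorem exists_pos_smul_mem_frontier (hK : IsSymmConvexBody K) (hx : x ≠ 0) :
    ∃ c : ℝ, 0 < c ∧ ∃ v ∈ frontier K, c • v = x :=
  ⟨gauge K x, hK.gauge_pos hx, radialProj K x, hK.mem_frontier_iff.2 (hK.gauge_radialProj hx),
    smul_inv_smul₀ (hK.gauge_pos hx).ne' x⟩

theorem continuousOn_radialProj (hK : IsSymmConvexBody K) : ContinuousOn (radialProj K) {0}ᶜ :=
  (hK.continuous_gauge.continuousOn.inv₀ fun _ hx => (hK.gauge_pos hx).ne').smul continuousOn_id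

theorem image_radialProj_segment (hK : IsSymmConvexBody K) (hpq : LinearIndependent ℝ ![p, q]) :
    radialProj K '' segment ℝ p q = frontier K ∩ pairCone p q := by
  apply Subset.antisymm
  · rintro _ ⟨z, hz, rfl⟩
    have hz0 : z ≠ 0 := by
      rw [segment_eq_image_lineMap] at hz
      obtain ⟨u, -, rfl⟩ := hz
      exact hpq.lineMap_ne_zero u
    exact ⟨hK.mem_frontier_iff.2 (hK.gauge_radialProj hz0),
      smul_mem_pairCone (inv_nonneg.2 (gauge_nonneg z)) (segment_subset_pairCone hz)⟩
  · rintro y ⟨hy, s, t, hs, ht, rfl⟩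
    have hst : 0 < s + t := by
      refine (add_nonneg hs ht).lt_of_ne fun h => hK.ne_zero_of_mem_frontier hy ?_
      rw [show s = 0 by linarith, show t = 0 by linarith]
      simp
    refine ⟨(s + t)⁻¹ • (s • p + t • q),
      ⟨s / (s + t), t / (s + t), by positivity, by positivity, by field_simp, ?_⟩, ?_⟩
    · rw [smul_add, smul_smul, smul_smul, div_eq_inv_mul, div_eq_inv_mul]
    · rw [radialProj_smul_of_pos (inv_pos.2 hst),
        radialProj_of_gauge_eq_one (hK.mem_frontier_iff.1 hy)]

theorem injective_radialProj_lineMap (hK : IsSymmConvexBody K)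
    (hpq : LinearIndependent ℝ ![p, q]) :
    Function.Injective fun u : ℝ => radialProj K (AffineMap.lineMap p q u) := by
  intro u₁ u₂ h
  have hcoord : ∀ g u : ℝ, g • AffineMap.lineMap p q u = (g * (1 - u)) • p + (g * u) • q :=
    fun g u => by rw [AffineMap.lineMap_apply_module]; module
  obtain ⟨h₁, h₂⟩ := hpq.eq_of_pair ((hcoord _ _).symm.trans (h.trans (hcoord _ _)))
  have hg : (gauge K (AffineMap.lineMap p q u₁))⁻¹ = (gauge K (AffineMap.lineMap p q u₂))⁻¹ := by
    linear_combination h₁ + h₂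
  rw [← hg] at h₂
  exact mul_left_cancel₀ (inv_ne_zero (hK.gauge_pos (hpq.lineMap_ne_zero u₁)).ne') h₂

theorem isBArc_frontier_inter_pairCone (hK : IsSymmConvexBody K) (hp : p ∈ frontier K)
    (hq : q ∈ frontier K) (hpq : LinearIndependent ℝ ![p, q]) :
    IsBArc K (frontier K ∩ pairCone p q) p q := by
  set f : ℝ → Plane := fun u => radialProj K (AffineMap.lineMap p q u)
  have hf : Continuous f := hK.continuousOn_radialProj.comp_continuous
    AffineMap.lineMap_continuous hpq.lineMap_ne_zero
  have himage : f '' Icc 0 1 = frontier K ∩ pairCone p q := by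
    rw [← hK.image_radialProj_segment hpq, segment_eq_image_lineMap, image_image]
  have hf0 : f 0 = p := by simp [f, radialProj_of_gauge_eq_one (hK.mem_frontier_iff.1 hp)]
  have hf1 : f 1 = q := by simp [f, radialProj_of_gauge_eq_one (hK.mem_frontier_iff.1 hq)]
  refine ⟨inter_subset_left, himage ▸ (isCompact_Icc.image hf).isClosed,
    himage ▸ isPreconnected_Icc.image f hf.continuousOn, ⟨hp, left_mem_pairCone⟩,
    ⟨hq, right_mem_pairCone⟩, fun z hz hnz => hK.ne_zero_of_mem_frontier hz.1
      (hpq.eq_zero_of_mem_pairCone_of_neg_mem hz.2 hnz.2), ?_⟩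
  intro C hC _ hCconn hpC hqC
  rw [← himage] at hC ⊢
  exact hCconn.eq_image_Icc hf.continuousOn (hK.injective_radialProj_lineMap hpq).injOn hC
    (hf0 ▸ hpC) (hf1 ▸ hqC)

theorem linearIndependent_of_bOrth (hK : IsSymmConvexBody K) (hp : p ∈ frontier K)
    (hq : q ∈ frontier K) (h : BOrth K p q) : LinearIndependent ℝ ![p, q] :=
  h.linearIndependent (hK.gauge_pos (hK.ne_zero_of_mem_frontier hp)) (hK.ne_zero_of_mem_frontier hq)

end IsSymmConvexBody

theorem IsBMeasure.measure_sdiff_frontier_inter_pairCone {K : Set Plane} {μ : Measure Plane}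
    {p p' q : Plane} (hμ : IsBMeasure K μ) (hK : IsSymmConvexBody K) (hp : p ∈ frontier K)
    (hp' : p' ∈ frontier K) (hq : q ∈ frontier K) (hpq : BOrth K p q) (hp'q : BOrth K p' q)
    (hsub : pairCone p' q ⊆ pairCone p q) :
    μ ((frontier K ∩ pairCone p q) \ (frontier K ∩ pairCone p' q)) = 0 := by
  have harc := hK.isBArc_frontier_inter_pairCone hp hq (hK.linearIndependent_of_bOrth hp hq hpq)
  have harc' :=
    hK.isBArc_frontier_inter_pairCone hp' hq (hK.linearIndependent_of_bOrth hp' hq hp'q)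
  rw [measure_sdiff (inter_subset_inter_right _ hsub) harc'.2.1.measurableSet.nullMeasurableSet
      (hμ.2 _ _ _ harc' hp'q ▸ ENNReal.ofReal_ne_top), hμ.2 _ _ _ harc hpq, hμ.2 _ _ _ harc' hp'q,
    tsub_self]

/-- Any B-measure vanishes on non-degenerate segments of the boundary. -/
theorem stmt_1 (K : Set Plane) (hK : IsSymmConvexBody K)
    (μ : Measure Plane) (hμ : IsBMeasure K μ)
    (a b : Plane) (hab : a ≠ b) (hseg : segment ℝ a b ⊆ frontier K) :
    μ (segment ℝ a b) = 0 := by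
  obtain ⟨c, hc, v, hv, hcv⟩ := hK.exists_pos_smul_mem_frontier (sub_ne_zero.2 hab.symm)
  obtain rfl : b = a + c • v := by rw [hcv, add_sub_cancel]
  have hBOrth : ∀ x ∈ segment ℝ a (a + c • v), BOrth K x v := fun x hx => by
    have := (hK.bOrth_sub_of_segment_subset_frontier hseg hx).smul_right c⁻¹
    rwa [← hcv, inv_smul_smul₀ hc.ne'] at this
  have ha := left_mem_segment ℝ a (a + c • v)
  have hb := right_mem_segment ℝ a (a + c • v)
  have hnull := hμ.measure_sdiff_frontier_inter_pairCone hK (hseg ha) (hseg hb) hv (hBOrth _ ha)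
    (hBOrth _ hb) (pairCone_add_smul_subset hc.le)
  have hsub : segment ℝ a (a + c • v) ⊆
      (frontier K ∩ pairCone a v) \ (frontier K ∩ pairCone (a + c • v) v) ∪ {a + c • v} := by
    intro x hx
    rcases (hK.linearIndependent_of_bOrth (hseg ha) hv (hBOrth a ha)).segment_subset_sdiff_pairCone
      hc.le hx with ⟨hxa, hxb⟩ | hx
    · exact Or.inl ⟨⟨hseg hx, hxa⟩, fun h => hxb h.2⟩
    · exact Or.inr hx
  exact measure_mono_null hsub (measure_union_null hnull (hμ.1.2.2.2 _))
end

section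
/- For every non-empty closed perfect set H ⊆ [0,1], there exists an atomless Borel probability measure on [0,1] whose support is exactly H. -/
open Set MeasureTheory Pointwise

open Filter Topology

/-!
Push the fair-coin measure on the Cantor space `ℕ → Bool` forward along a continuous injection
into a perfect set: this gives an atomless probability measure concentrated on the set, though
not necessarily with full support. Doing so for the perfect sets `closure (U ∩ C)`, with `U`
running through a countable basis, and mixing the countably many measures obtained produces a
measure whose support is all of `C`.
-/

open Filter Topology ProbabilityTheory TopologicalSpace

lemma exists_isProbabilityMeasure_nullSingletonClass_nat_bool :
    ∃ ν : Measure (ℕ → Bool), IsProbabilityMeasure ν ∧ NullSingletonClass ν := by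
  refine ⟨Measure.infinitePi fun _ => uniformOn univ, inferInstance, ⟨fun x => ?_⟩⟩
  have hhalf (b : Bool) : uniformOn (univ : Set Bool) {b} = 2⁻¹ := by
    rw [uniformOn_univ]; simp
  rw [Measure.infinitePi_singleton, ENNReal.tprod_eq_iInf_prod fun _ => prob_le_one]
  simp only [hhalf, Finset.prod_const]
  refine le_antisymm (ge_of_tendsto' (ENNReal.tendsto_pow_atTop_nhds_zero_of_lt_one
    (r := 2⁻¹) (by norm_num)) fun n => ?_) bot_le
  simpa using iInf_le (fun s : Finset ℕ => (2⁻¹ : ENNReal) ^ s.card) (Finset.range n)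

section Perfect

variable {α : Type*} [MetricSpace α] [CompleteSpace α] [MeasurableSpace α] [BorelSpace α]
  {C : Set α}

theorem Perfect.exists_isProbabilityMeasure_nullSingletonClass (hC : Perfect C)
    (hne : C.Nonempty) :
    ∃ μ : Measure α, IsProbabilityMeasure μ ∧ NullSingletonClass μ ∧ μ Cᶜ = 0 := by
  obtain ⟨f, hrange, hcont, hinj⟩ := hC.exists_nat_bool_injection hne
  obtain ⟨ν, hν, hνatoms⟩ := exists_isProbabilityMeasure_nullSingletonClass_nat_bool
  refine ⟨ν.map f, Measure.isProbabilityMeasure_map hcont.aemeasurable, ⟨fun x => ?_⟩, ?_⟩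
  · rw [Measure.map_apply hcont.measurable (measurableSet_singleton x)]
    exact Subsingleton.measure_zero (fun a ha b hb => hinj (ha.trans hb.symm)) ν
  · rw [Measure.map_apply hcont.measurable hC.closed.measurableSet.compl, preimage_compl,
      preimage_eq_univ_iff.2 hrange, compl_univ, measure_empty]

theorem Perfect.exists_isProbabilityMeasure_nullSingletonClass_closure (hC : Perfect C)
    {U : Set α} (hU : IsOpen U) (hne : (U ∩ C).Nonempty) :
    ∃ μ : Measure α, IsProbabilityMeasure μ ∧ NullSingletonClass μ ∧ μ Cᶜ = 0 ∧
      μ (closure U)ᶜ = 0 := by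
  obtain ⟨x, hxU, hxC⟩ := hne
  obtain ⟨hD, hDne⟩ := hC.closure_nhds_inter x hxC hxU hU
  obtain ⟨μ, hμ, hμatoms, hμD⟩ := hD.exists_isProbabilityMeasure_nullSingletonClass hDne
  refine ⟨μ, hμ, hμatoms, measure_mono_null ?_ hμD, measure_mono_null ?_ hμD⟩
  · exact compl_subset_compl.2 (closure_minimal inter_subset_right hC.closed)
  · exact compl_subset_compl.2 (closure_mono inter_subset_left)

end Perfect

theorem msupp_eq_of_measure_compl_eq_zero {α : Type*} [TopologicalSpace α] [MeasurableSpace α]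
    {μ : Measure α} {C : Set α} (hC : IsClosed C) (hnull : μ Cᶜ = 0)
    (hpos : ∀ U, IsOpen U → (U ∩ C).Nonempty → μ U ≠ 0) : msupp μ = C := by
  ext x
  refine ⟨fun hx => ?_, fun hx U hU hxU => pos_iff_ne_zero.2 (hpos U hU ⟨x, hxU, hx⟩)⟩
  by_contra hxC
  exact (hx Cᶜ hC.isOpen_compl hxC).ne' hnull

theorem Perfect.exists_isProbabilityMeasure_nullSingletonClass_msupp_eq {α : Type*}
    [MetricSpace α] [CompleteSpace α] [SecondCountableTopology α] [MeasurableSpace α]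
    [BorelSpace α] {C : Set α} (hC : Perfect C) (hne : C.Nonempty) :
    ∃ μ : Measure α, IsProbabilityMeasure μ ∧ NullSingletonClass μ ∧ μ Cᶜ = 0 ∧ msupp μ = C := by
  set B := {b ∈ countableBasis α | (b ∩ C).Nonempty}
  have : Countable B := ((countable_countableBasis α).mono (sep_subset _ _)).to_subtype
  have : Nonempty B := by
    obtain ⟨x, hx⟩ := hne
    obtain ⟨b, hb, hxb, -⟩ :=
      (isBasis_countableBasis α).exists_subset_of_mem_open (mem_univ x) isOpen_univ
    exact ⟨⟨b, hb, x, hxb, hx⟩⟩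
  have hlocal (b : B) := hC.exists_isProbabilityMeasure_nullSingletonClass_closure
    ((isBasis_countableBasis α).isOpen b.2.1) b.2.2
  choose μ hμ hμatoms hμC hμb using hlocal
  have : NeZero (Measure.sum μ) :=
    ⟨fun h => IsProbabilityMeasure.ne_zero _ (Measure.sum_eq_zero.1 h (Classical.arbitrary B))⟩
  -- `toFinite` rescales the s-finite measure `sum μ` to a probability measure with the same
  -- null sets.
  refine ⟨(Measure.sum μ).toFinite, inferInstance, ⟨fun x => by simp [measure_singleton]⟩,
    by simp [hμC], msupp_eq_of_measure_compl_eq_zero hC.closed (by simp [hμC]) ?_⟩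
  rintro U hU ⟨x, hxU, hxC⟩
  obtain ⟨b, hb, hxb, hbU⟩ := (isBasis_countableBasis α).exists_closure_subset (hU.mem_nhds hxU)
  have hμU : μ ⟨b, hb, x, hxb, hxC⟩ U = 1 := (prob_compl_eq_zero_iff hU.measurableSet).1
    (measure_mono_null (compl_subset_compl.2 hbU) (hμb _))
  rw [ne_eq, toFinite_apply_eq_zero_iff, Measure.sum_apply_eq_zero, not_forall]
  exact ⟨_, hμU ▸ one_ne_zero⟩

/-- Every nonempty closed perfect subset of `[0,1]` is the support of an
atomless Borel probability measure on `[0,1]`. -/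
theorem stmt_5 (H : Set ℝ) (hH1 : H ⊆ Icc (0:ℝ) 1) (hHne : H.Nonempty)
    (hHperf : Perfect H) :
    ∃ μ : Measure ℝ, IsProbabilityMeasure μ ∧ (∀ x : ℝ, μ {x} = 0) ∧
      μ (Icc (0:ℝ) 1)ᶜ = 0 ∧ msupp μ = H := by
  obtain ⟨μ, hμ, hμatoms, hμH, hsupp⟩ :=
    hHperf.exists_isProbabilityMeasure_nullSingletonClass_msupp_eq hHne
  exact ⟨μ, hμ, measure_singleton, measure_mono_null (compl_subset_compl.2 hH1) hμH, hsupp⟩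
end

section
/- Let K be an origin-symmetric planar convex body and let [x⁻, x⁺] be a non-degenerate segment contained in ∂K. If y ∈ ∂K is parallel to the segment (i.e., y is a positive multiple of x⁺ − x⁻), then x⁻ ⊣ y and x⁺ ⊣ y. -/
open Set MeasureTheory Pointwise

/-!
The gauge of `K` is convex, so along the line through `a` and `b` it restricts to a convex
function of one real variable. That function equals `1` on the segment `[a, b] ⊆ ∂K`, and a convex
function of a real variable that is constant on a non-degenerate interval attains its minimum there.
Hence the gauge is at least `1 = ‖a‖_K = ‖b‖_K` on the whole line, which is Birkhoff orthogonality
of `a` and `b` to every vector parallel to `b - a`.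
-/

open Topology

theorem ConvexOn.isMinOn_of_forall_mem_Icc_eq {f : ℝ → ℝ} (hf : ConvexOn ℝ univ f) {p q : ℝ}
    (hpq : p < q) (hconst : ∀ s ∈ Icc p q, f s = f p) : IsMinOn f univ p := by
  intro s _
  rcases lt_or_ge s p with hsp | hps
  · have hp : p ∈ openSegment ℝ s q := by rw [openSegment_eq_Ioo (hsp.trans hpq)]; exact ⟨hsp, hpq⟩
    exact hf.le_left_of_right_le (mem_univ s) (mem_univ q) hp (hconst q ⟨hpq.le, le_rfl⟩).le
  rcases le_or_gt s q with hsq | hqs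
  · exact (hconst s ⟨hps, hsq⟩).ge
  · have hq : q ∈ openSegment ℝ p s := by rw [openSegment_eq_Ioo (hpq.trans hqs)]; exact ⟨hpq, hqs⟩
    rw [← hconst q ⟨hpq.le, le_rfl⟩]
    exact hf.le_right_of_left_le (mem_univ p) (mem_univ s) hq (hconst q ⟨hpq.le, le_rfl⟩).ge

section Gauge

variable {E : Type*} [AddCommGroup E] [Module ℝ E] {K : Set E}

theorem convexOn_gauge (hK : Convex ℝ K) (habs : Absorbent ℝ K) : ConvexOn ℝ univ (gauge K) :=
  ⟨convex_univ, fun u _ v _ α β hα hβ _ => by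
    calc gauge K (α • u + β • v) ≤ gauge K (α • u) + gauge K (β • v) := gauge_add_le hK habs _ _
      _ = α • gauge K u + β • gauge K v := by
        rw [gauge_smul_of_nonneg hα, gauge_smul_of_nonneg hβ]⟩

variable [TopologicalSpace E] [IsTopologicalAddGroup E] [ContinuousSMul ℝ E]

theorem Convex.zero_mem_interior_of_neg_eq (hK : Convex ℝ K)
    (hsymm : K = -K) (hne : (interior K).Nonempty) : (0 : E) ∈ interior K := by
  obtain ⟨x, hx⟩ := hne
  have hneg : -interior K ⊆ interior K := by
    refine interior_maximal ?_ isOpen_interior.neg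
    calc -interior K ⊆ -K := neg_subset_neg.2 interior_subset
      _ = K := hsymm.symm
  simpa using hK.interior hx (hneg (neg_mem_neg.2 hx)) (by norm_num : (0 : ℝ) ≤ 1 / 2)
    (by norm_num : (0 : ℝ) ≤ 1 / 2) (by norm_num)

theorem one_le_gauge_lineMap_of_segment_subset_frontier (hK : Convex ℝ K) (h0 : K ∈ 𝓝 0)
    {a b : E} (hseg : segment ℝ a b ⊆ frontier K) (s : ℝ) :
    1 ≤ gauge K (AffineMap.lineMap a b s) := by
  have hline : ConvexOn ℝ univ (gauge K ∘ AffineMap.lineMap a b) :=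
    (convexOn_gauge hK (absorbent_nhds_zero h0)).comp_affineMap _
  have hone : ∀ r ∈ Icc (0 : ℝ) 1, gauge K (AffineMap.lineMap a b r) = 1 := fun r hr =>
    (gauge_eq_one_iff_mem_frontier hK h0).2
      (hseg (segment_eq_image_lineMap ℝ a b ▸ mem_image_of_mem _ hr))
  have hmin := hline.isMinOn_of_forall_mem_Icc_eq zero_lt_one fun r hr => by
    simp only [Function.comp_apply, hone r hr, hone 0 ⟨le_rfl, zero_le_one⟩]
  exact (hone 0 ⟨le_rfl, zero_le_one⟩).ge.trans (hmin (mem_univ s))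

end Gauge

theorem stmt_8_general (K : Set Plane) (hK : IsSymmConvexBody K)
    (a b : Plane) (hseg : segment ℝ a b ⊆ frontier K)
    (y : Plane) (c : ℝ)
    (hpar : y = c • (b - a)) :
    BOrth K a y ∧ BOrth K b y := by
  obtain ⟨hconv, -, hne, hsymm⟩ := hK
  have h0 : K ∈ 𝓝 0 := mem_interior_iff_mem_nhds.1 (hconv.zero_mem_interior_of_neg_eq hsymm hne)
  have hline := one_le_gauge_lineMap_of_segment_subset_frontier hconv h0 hseg
  have hgauge : ∀ x ∈ segment ℝ a b, gauge K x = 1 := fun x hx =>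
    (gauge_eq_one_iff_mem_frontier hconv h0).2 (hseg hx)
  subst hpar
  refine ⟨fun t => ?_, fun t => ?_⟩
  · have hpt : a + t • c • (b - a) = AffineMap.lineMap a b (t * c) := by
      rw [AffineMap.lineMap_apply_module]; module
    rw [hgauge a (left_mem_segment ℝ a b), hpt]
    exact hline _
  · have hpt : b + t • c • (b - a) = AffineMap.lineMap a b (1 + t * c) := by
      rw [AffineMap.lineMap_apply_module]; module
    rw [hgauge b (right_mem_segment ℝ a b), hpt]
    exact hline _

/-- The endpoints of a boundary segment are Birkhoff orthogonal to any
boundary point parallel to the segment. -/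
theorem stmt_8 (K : Set Plane) (hK : IsSymmConvexBody K)
    (a b : Plane) (hab : a ≠ b) (hseg : segment ℝ a b ⊆ frontier K)
    (y : Plane) (hy : y ∈ frontier K) (c : ℝ) (hc : 0 < c)
    (hpar : y = c • (b - a)) :
    BOrth K a y ∧ BOrth K b y :=
  stmt_8_general K hK a b hseg y c hpar
end
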